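/- Translation formula on Euclidean multivectors: if A is any element of the Clifford subalgebra generated by ℝⁿ and T = 1 + ½ e_∞ t with t in ℝⁿ, then T A T† = A + e_∞ (t ⌋ A), where t ⌋ A denotes the left interior (inner) product of the vector t with A. -/
import Mathlib


noncomputable section

open CliffordAlgebra
open scoped RealInnerProductSpace

/-- The conformal space: ℝⁿ extended by `e_o` and `e_∞`, represented as
triples `(x, a, b) = x + a • e_o + b • e_∞`. -/
abbrev ConfSpace (n : ℕ) := EuclideanSpace ℝ (Fin n) × ℝ × ℝ

/-- The bilinear form of the conformal space: the Euclidean inner product on ℝⁿ,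
with `e_o² = e_∞² = 0`, `e_o·e_∞ = -1`, and `e_o, e_∞ ⊥ ℝⁿ`. -/
def confBilin (n : ℕ) : LinearMap.BilinForm ℝ (ConfSpace n) :=
  LinearMap.mk₂ ℝ (fun u v => ⟪u.1, v.1⟫ - u.2.1 * v.2.2 - u.2.2 * v.2.1)
    (fun m₁ m₂ v => by
      simp only [Prod.fst_add, Prod.snd_add, inner_add_left]; ring)
    (fun c m v => by
      simp only [Prod.smul_fst, Prod.smul_snd, smul_eq_mul, real_inner_smul_left]; ring)
    (fun m v₁ v₂ => by
      simp only [Prod.fst_add, Prod.snd_add, inner_add_right]; ring)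
    (fun c m v => by
      simp only [Prod.smul_fst, Prod.smul_snd, smul_eq_mul, real_inner_smul_right]; ring)

/-- The quadratic form of the conformal space. -/
def confQ (n : ℕ) : QuadraticForm ℝ (ConfSpace n) :=
  LinearMap.BilinMap.toQuadraticMap (confBilin n)

/-- The null vector `e_o` representing the origin. -/
def eo (n : ℕ) : ConfSpace n := (0, 1, 0)

/-- The null vector `e_∞` representing the point at infinity. -/
def einf (n : ℕ) : ConfSpace n := (0, 0, 1)

/-- Embedding of a Euclidean vector into the conformal space. -/
def embV {n : ℕ} (x : EuclideanSpace ℝ (Fin n)) : ConfSpace n := (x, 0, 0)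

/-- The conformal point `c(x) = e_o + x + ½‖x‖² e_∞` in the Clifford algebra. -/
def confPt {n : ℕ} (x : EuclideanSpace ℝ (Fin n)) : CliffordAlgebra (confQ n) :=
  ι (confQ n) (eo n) + ι (confQ n) (embV x) + (‖x‖ ^ 2 / 2) • ι (confQ n) (einf n)

/-- The translator `T = 1 + ½ e_∞ t`. -/
def translator {n : ℕ} (t : EuclideanSpace ℝ (Fin n)) : CliffordAlgebra (confQ n) :=
  1 + (1 / 2 : ℝ) • (ι (confQ n) (einf n) * ι (confQ n) (embV t))

/-- The reverse of the translator, `T† = 1 - ½ e_∞ t`. -/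
def translatorRev {n : ℕ} (t : EuclideanSpace ℝ (Fin n)) : CliffordAlgebra (confQ n) :=
  1 - (1 / 2 : ℝ) • (ι (confQ n) (einf n) * ι (confQ n) (embV t))

lemma confQ_apply {n : ℕ} (u : ConfSpace n) :
    confQ n u = ⟪u.1, u.1⟫ - u.2.1 * u.2.2 - u.2.2 * u.2.1 := by
  rw [confQ, LinearMap.BilinMap.toQuadraticMap_apply, confBilin, LinearMap.mk₂_apply]

lemma einf_sq {n : ℕ} : ι (confQ n) (einf n) * ι (confQ n) (einf n) = 0 := by
  rw [ι_sq_scalar, confQ_apply]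
  simp [einf]

lemma einf_anticomm {n : ℕ} (x : EuclideanSpace ℝ (Fin n)) :
    ι (confQ n) (einf n) * ι (confQ n) (embV x) =
      - (ι (confQ n) (embV x) * ι (confQ n) (einf n)) := by
  have h := CliffordAlgebra.ι_mul_ι_add_swap (Q := confQ n) (einf n) (embV x)
  have hp : QuadraticMap.polar (confQ n) (einf n) (embV x) = 0 := by
    simp [QuadraticMap.polar, confQ_apply, einf, embV, Prod.add_def]
  rw [hp, map_zero] at h
  rw [eq_neg_iff_add_eq_zero]
  exact h

lemma einf_comm_involute {n : ℕ} (A : CliffordAlgebra (confQ n))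
    (hA : A ∈ Algebra.adjoin ℝ
      (Set.range fun x : EuclideanSpace ℝ (Fin n) => ι (confQ n) (embV x))) :
    ι (confQ n) (einf n) * A = involute A * ι (confQ n) (einf n) ∧
      A * ι (confQ n) (einf n) = ι (confQ n) (einf n) * involute A := by
  induction hA using Algebra.adjoin_induction with
  | mem a ha =>
      obtain ⟨x, rfl⟩ := ha
      have h := einf_anticomm x
      constructor
      · rw [h, involute_ι, neg_mul]
      · rw [involute_ι, mul_neg, eq_comm, neg_eq_iff_eq_neg, ← h]
  | algebraMap r =>
      constructor <;> simp [Algebra.commutes]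
  | add a b _ _ ha hb =>
      exact ⟨by rw [mul_add, ha.1, hb.1, map_add, add_mul],
             by rw [add_mul, ha.2, hb.2, map_add, mul_add]⟩
  | mul a b _ _ ha hb =>
      constructor
      · rw [← mul_assoc, ha.1, mul_assoc, hb.1, map_mul, mul_assoc]
      · rw [mul_assoc, hb.2, ← mul_assoc, ha.2, map_mul, mul_assoc]

/-- translation formula on Euclidean multivectors:
for `A` in the subalgebra generated by ℝⁿ, `T A T† = A + e_∞ (t ⌋ A)`, where
`t ⌋ A = ½(t A - α(A) t)` is the left interior product (gradewise
`t·A_k = ½(t A_k - (-1)^k A_k t)`, expressed via the grade involution `α`). -/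
theorem translator_sandwich_euclidean {n : ℕ} (t : EuclideanSpace ℝ (Fin n))
    (A : CliffordAlgebra (confQ n))
    (hA : A ∈ Algebra.adjoin ℝ
      (Set.range fun x : EuclideanSpace ℝ (Fin n) => ι (confQ n) (embV x))) :
    translator t * A * translatorRev t =
      A + ι (confQ n) (einf n) *
        ((1 / 2 : ℝ) •
          (ι (confQ n) (embV t) * A - involute A * ι (confQ n) (embV t))) := by
  have e2 := einf_sq (n := n)
  have hc := einf_comm_involute A hA
  have hcv := (einf_comm_involute (ι (confQ n) (embV t) * A)
    (mul_mem (Algebra.subset_adjoin ⟨t, rfl⟩) hA)).1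
  set e := ι (confQ n) (einf n)
  set v := ι (confQ n) (embV t)
  have key : e * v * A * (e * v) = 0 := by
    rw [mul_assoc e v A, hcv, mul_assoc, ← mul_assoc e e v, e2, zero_mul, mul_zero]
  have hAev : A * (e * v) = e * (involute A * v) := by
    rw [← mul_assoc, hc.2, mul_assoc]
  simp only [translator, translatorRev, mul_add, add_mul, mul_sub, sub_mul,
    mul_one, one_mul, smul_mul_assoc, mul_smul_comm, smul_sub, smul_smul]
  rw [key, hAev, mul_assoc e v A]
  norm_num
  abel
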